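/- arXiv:2603.06119 — 4 statements merged into one kernel-verified Lean document; each statement's English description precedes it below -/
import Mathlib

section
/- Let F be a real normed vector space, γ ∈ (0,1], L ≥ 0, and let T : ℝ^n ∖ {0} → F be positively 0-homogeneous (T(t x) = T(x) for all t > 0, x ≠ 0) and satisfy ‖T(u) − T(v)‖ ≤ L ‖u − v‖^γ for all u, v on the unit sphere. Then for all ξ ≠ 0 and all ζ with ξ + ζ ≠ 0 one has ‖T(ξ) − T(ξ + ζ)‖ ≤ 4 L (‖ζ‖ / ‖ξ‖)^γ. -/
/-!
By homogeneity `T ξ = T (ξ/‖ξ‖)` and `T η = T (η/‖η‖)` for `η = ξ + ζ`, so it suffices to bound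
the distance of the normalized points. Splitting `ξ/‖ξ‖ - η/‖η‖` into `(ξ - η)/‖ξ‖` and a radial
correction of size `|‖η‖ - ‖ξ‖|/‖ξ‖ ≤ ‖ζ‖/‖ξ‖` bounds it by `2‖ζ‖/‖ξ‖`. The Hölder bound on the
sphere then gives `L 2^γ (‖ζ‖/‖ξ‖)^γ`, and `2^γ ≤ 2` since `γ ≤ 1`.
-/

open Real

section ZeroHomogeneous

variable {E F : Type*} [NormedAddCommGroup E] [NormedSpace ℝ E] [SeminormedAddCommGroup F]

theorem norm_inv_norm_smul_sub_inv_norm_smul_le {x y : E} (hx : x ≠ 0) (hy : y ≠ 0) :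
    ‖‖x‖⁻¹ • x - ‖y‖⁻¹ • y‖ ≤ 2 * ‖x - y‖ / ‖x‖ := by
  have hx' : ‖x‖ ≠ 0 := norm_ne_zero_iff.2 hx
  have hy' : ‖y‖ ≠ 0 := norm_ne_zero_iff.2 hy
  have hsplit : ‖x‖⁻¹ • x - ‖y‖⁻¹ • y = ‖x‖⁻¹ • ((x - y) + (‖y‖ - ‖x‖) • (‖y‖⁻¹ • y)) := by
    match_scalars <;> field_simp
    ring
  have hradial : ‖(‖y‖ - ‖x‖) • (‖y‖⁻¹ • y)‖ ≤ ‖x - y‖ := by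
    have hunit : ‖‖y‖⁻¹ • y‖ = 1 := norm_smul_inv_norm (𝕜 := ℝ) hy
    rw [norm_smul, hunit, mul_one, norm_sub_rev x y]
    exact abs_norm_sub_norm_le y x
  calc ‖‖x‖⁻¹ • x - ‖y‖⁻¹ • y‖
      = ‖x‖⁻¹ * ‖(x - y) + (‖y‖ - ‖x‖) • (‖y‖⁻¹ • y)‖ := by
        rw [hsplit, norm_smul, norm_inv, norm_norm]
    _ ≤ ‖x‖⁻¹ * (‖x - y‖ + ‖x - y‖) := by
        gcongr
        exact (norm_add_le _ _).trans (add_le_add_right hradial _)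
    _ = 2 * ‖x - y‖ / ‖x‖ := by ring

theorem norm_sub_le_of_zero_homogeneous_of_holder_on_sphere {T : E → F} {γ L : ℝ}
    (hγ : 0 ≤ γ) (hL : 0 ≤ L)
    (hhom : ∀ t : ℝ, 0 < t → ∀ x : E, x ≠ 0 → T (t • x) = T x)
    (hHolder : ∀ u v : E, ‖u‖ = 1 → ‖v‖ = 1 → ‖T u - T v‖ ≤ L * ‖u - v‖ ^ γ)
    {x y : E} (hx : x ≠ 0) (hy : y ≠ 0) :
    ‖T x - T y‖ ≤ L * (2 * ‖x - y‖ / ‖x‖) ^ γ := by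
  have hTx := hhom _ (inv_pos.2 (norm_pos_iff.2 hx)) x hx
  have hTy := hhom _ (inv_pos.2 (norm_pos_iff.2 hy)) y hy
  rw [← hTx, ← hTy]
  calc _ ≤ L * ‖‖x‖⁻¹ • x - ‖y‖⁻¹ • y‖ ^ γ :=
        hHolder _ _ (norm_smul_inv_norm hx) (norm_smul_inv_norm hy)
    _ ≤ L * (2 * ‖x - y‖ / ‖x‖) ^ γ := by
        gcongr
        exact norm_inv_norm_smul_sub_inv_norm_smul_le hx hy

end ZeroHomogeneous

/-- A positively `0`-homogeneous map which is `γ`-Hölder on the unit sphere satisfies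
`‖T(ξ) − T(ξ+ζ)‖ ≤ 4 L (‖ζ‖/‖ξ‖)^γ` for every `ξ ≠ 0` and `ζ` with `ξ + ζ ≠ 0`. -/
theorem holder_estimate_zero_homogeneous
    (n : ℕ) (F : Type*) [NormedAddCommGroup F]
    (γ L : ℝ) (hγ : 0 < γ) (hγ1 : γ ≤ 1) (hL : 0 ≤ L)
    (T : EuclideanSpace ℝ (Fin n) → F)
    (hhom : ∀ t : ℝ, 0 < t → ∀ x : EuclideanSpace ℝ (Fin n), x ≠ 0 →
      T (t • x) = T x)
    (hHolder : ∀ u v : EuclideanSpace ℝ (Fin n), ‖u‖ = 1 → ‖v‖ = 1 →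
      ‖T u - T v‖ ≤ L * ‖u - v‖ ^ γ) :
    ∀ ξ ζ : EuclideanSpace ℝ (Fin n), ξ ≠ 0 → ξ + ζ ≠ 0 →
      ‖T ξ - T (ξ + ζ)‖ ≤ 4 * L * (‖ζ‖ / ‖ξ‖) ^ γ := by
  intro ξ ζ hξ hξζ
  have htwo : (2 : ℝ) ^ γ ≤ 4 :=
    calc (2 : ℝ) ^ γ ≤ 2 ^ (1 : ℝ) := rpow_le_rpow_of_exponent_le (by norm_num) hγ1
      _ ≤ 4 := by norm_num
  calc ‖T ξ - T (ξ + ζ)‖ ≤ L * (2 * ‖ξ - (ξ + ζ)‖ / ‖ξ‖) ^ γ :=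
        norm_sub_le_of_zero_homogeneous_of_holder_on_sphere hγ.le hL hhom hHolder hξ hξζ
    _ = 2 ^ γ * L * (‖ζ‖ / ‖ξ‖) ^ γ := by
        rw [sub_add_cancel_left, norm_neg, mul_div_assoc,
          mul_rpow zero_le_two (by positivity)]
        ring
    _ ≤ 4 * L * (‖ζ‖ / ‖ξ‖) ^ γ := by gcongr
end

section
/- Let n ≥ 2 and let μ be a finite Borel measure on ℝ^n. For x ∈ ℝ^n and r > 0 define the β-number β_μ(x,r) := inf_P r^{−n} ∫_{B(x,r)} dist(z, P) dμ(z), where the infimum is over all affine hyperplanes P ⊆ ℝ^n (affine subspaces of dimension n−1) and B(x,r) is the open Euclidean ball. Let S ⊆ ℝ^n, c > 0 and r₀ > 0 be such that μ satisfies the lower Ahlfors–David bound μ(B(x,ρ)) ≥ c ρ^{n−1} for every x ∈ S and every 0 < ρ < r₀. Then there is a constant C depending only on n and c such that: for every η > 0, every s > 0 with s/10 < r₀, and every finite family of points {x_h}_{h ∈ I} ⊆ S with pairwise distances at least s/5, the number of indices h with β_μ(x_h, s) > η is at most C η^{−2} s^{1−n} ∫_{ℝ^n} β_μ(z, 2s)²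 dμ(z). -/
open MeasureTheory Metric
open scoped ENNReal Classical

/-- The Jones-type β-number of a measure `μ` at center `x` and scale `r`:
`β_μ(x,r) = inf_P r^{-n} ∫_{B(x,r)} dist(z,P) dμ(z)`, the infimum running over all
affine hyperplanes `P` (nonempty affine subspaces whose direction has dimension `n-1`). -/
noncomputable def betaNum (n : ℕ) (μ : Measure (EuclideanSpace ℝ (Fin n)))
    (x : EuclideanSpace ℝ (Fin n)) (r : ℝ) : ℝ≥0∞ :=
  ⨅ (P : AffineSubspace ℝ (EuclideanSpace ℝ (Fin n)))
    (_ : (P : Set (EuclideanSpace ℝ (Fin n))).Nonempty)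
    (_ : Module.finrank ℝ P.direction = n - 1),
    ENNReal.ofReal (r ^ (-(n : ℝ))) *
      ∫⁻ z in ball x r,
        ENNReal.ofReal (infDist z (P : Set (EuclideanSpace ℝ (Fin n)))) ∂μ

/-! Enlarging the ball from `B(x,s)` to `B(z,2s)` costs at most a factor `2ⁿ` in `β`, so on the
ball `B(x,s/10)` around a bad center `β_μ(·,2s)² ≥ (η/2ⁿ)²`. These balls are pairwise disjoint
and each has measure at least `c(s/10)ⁿ⁻¹`, so each bad center contributes at least
`c(s/10)ⁿ⁻¹(η/2ⁿ)²` to `∫ β_μ(z,2s)² dμ(z)`. -/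

lemma betaNum_le_mul_betaNum_of_ball_subset (n : ℕ) (μ : Measure (EuclideanSpace ℝ (Fin n)))
    {x z : EuclideanSpace ℝ (Fin n)} {r R : ℝ} (hr : 0 < r) (hR : 0 < R)
    (hsub : ball x r ⊆ ball z R) :
    betaNum n μ x r ≤ ENNReal.ofReal ((R / r) ^ n) * betaNum n μ z R := by
  have hscale : ENNReal.ofReal (r ^ (-(n : ℝ))) =
      ENNReal.ofReal ((R / r) ^ n) * ENNReal.ofReal (R ^ (-(n : ℝ))) := by
    rw [← ENNReal.ofReal_mul (by positivity), Real.rpow_neg hr.le, Real.rpow_neg hR.le,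
      Real.rpow_natCast, Real.rpow_natCast, div_pow]
    field_simp
  have hpos : ENNReal.ofReal ((R / r) ^ n) ≠ 0 := (ENNReal.ofReal_pos.2 (by positivity)).ne'
  simp only [betaNum, ENNReal.mul_iInf_of_ne hpos ENNReal.ofReal_ne_top]
  refine iInf_mono fun P => iInf_mono fun _ => iInf_mono fun _ => ?_
  rw [hscale, mul_assoc]
  gcongr

lemma betaNum_le_two_pow_mul_betaNum (n : ℕ) (μ : Measure (EuclideanSpace ℝ (Fin n)))
    {x z : EuclideanSpace ℝ (Fin n)} {s : ℝ} (hs : 0 < s) (hxz : dist x z ≤ s) :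
    betaNum n μ x s ≤ 2 ^ n * betaNum n μ z (2 * s) := by
  have := betaNum_le_mul_betaNum_of_ball_subset n μ hs (by positivity)
    (ball_subset_ball' (by linarith : s + dist x z ≤ 2 * s))
  rwa [mul_div_cancel_right₀ _ hs.ne', ENNReal.ofReal_pow zero_le_two, ENNReal.ofReal_ofNat]
    at this

lemma card_mul_le_lintegral_of_pairwiseDisjoint {ι X : Type*} [MeasurableSpace X]
    {μ : Measure X} {f : X → ℝ≥0∞} {T : Finset ι} {B : ι → Set X} {m b : ℝ≥0∞}
    (hB : ∀ i ∈ T, MeasurableSet (B i)) (hdisj : (T : Set ι).PairwiseDisjoint B)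
    (hm : ∀ i ∈ T, m ≤ μ (B i)) (hf : ∀ i ∈ T, ∀ z ∈ B i, b ≤ f z) :
    T.card * (m * b) ≤ ∫⁻ z, f z ∂μ :=
  calc (T.card : ℝ≥0∞) * (m * b) = ∑ _i ∈ T, m * b := by rw [Finset.sum_const, nsmul_eq_mul]
    _ ≤ ∑ i ∈ T, ∫⁻ z in B i, f z ∂μ := Finset.sum_le_sum fun i hi =>
      calc m * b ≤ μ (B i) * b := by gcongr; exact hm i hi
        _ = ∫⁻ _z in B i, b ∂μ := by rw [setLIntegral_const, mul_comm]
        _ ≤ ∫⁻ z in B i, f z ∂μ := setLIntegral_mono' (hB i hi) (hf i hi)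
    _ = ∫⁻ z in ⋃ i ∈ T, B i, f z ∂μ := (lintegral_biUnion_finset hdisj hB f).symm
    _ ≤ ∫⁻ z, f z ∂μ := setLIntegral_le_lintegral _ _

lemma four_pow_mul_ten_pow_div_mul_eq_one {n : ℕ} (hn : 1 ≤ n) {c η s : ℝ} (hc : c ≠ 0)
    (hη : 0 < η) (hs : 0 < s) :
    4 ^ n * 10 ^ (n - 1) / c * η ^ (-2 : ℝ) * s ^ ((1 : ℝ) - n) *
      (c * (s / 10) ^ (n - 1) * (η / 2 ^ n) ^ 2) = 1 := by
  obtain ⟨k, rfl⟩ := Nat.exists_eq_add_of_le hn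
  rw [Real.rpow_neg hη.le, Real.rpow_two, Nat.cast_add, Nat.cast_one, sub_add_cancel_left,
    Real.rpow_neg hs.le, Real.rpow_natCast, Nat.add_sub_cancel_left]
  simp only [div_pow, pow_add, show (4 : ℝ) = 2 * 2 by norm_num, mul_pow]
  field_simp

/-- Counting β-bad centers of a separated net under a lower Ahlfors–David bound:
the number of `s/5`-separated points of `S` with `β_μ(x,s) > η` is at most
`C η⁻² s^{1-n} ∫ β_μ(z,2s)² dμ(z)`, with `C = C(n,c)`. -/
theorem betaNum_bad_count
    (n : ℕ) (hn : 2 ≤ n) (c : ℝ) (hc : 0 < c) :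
    ∃ C : ℝ, 0 < C ∧
      ∀ (μ : Measure (EuclideanSpace ℝ (Fin n))), IsFiniteMeasure μ →
      ∀ (S : Set (EuclideanSpace ℝ (Fin n))) (r₀ : ℝ), 0 < r₀ →
      (∀ x ∈ S, ∀ ρ : ℝ, 0 < ρ → ρ < r₀ →
        ENNReal.ofReal (c * ρ ^ (n - 1)) ≤ μ (ball x ρ)) →
      ∀ η : ℝ, 0 < η → ∀ s : ℝ, 0 < s → s / 10 < r₀ →
      ∀ I : Finset (EuclideanSpace ℝ (Fin n)), (↑I : Set (EuclideanSpace ℝ (Fin n))) ⊆ S →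
      (∀ x ∈ I, ∀ y ∈ I, x ≠ y → s / 5 ≤ dist x y) →
      ((I.filter fun x => ENNReal.ofReal η < betaNum n μ x s).card : ℝ≥0∞) ≤
        ENNReal.ofReal (C * η ^ (-2 : ℝ) * s ^ ((1 : ℝ) - n)) *
          ∫⁻ z, (betaNum n μ z (2 * s)) ^ 2 ∂μ := by
  refine ⟨4 ^ n * 10 ^ (n - 1) / c, by positivity, ?_⟩
  intro μ _ S r₀ _ hAD η hη s hs hsr I hIS hsep
  set T := I.filter fun x => ENNReal.ofReal η < betaNum n μ x s
  have hTI : ∀ x ∈ T, x ∈ I := fun x hx => Finset.mem_of_mem_filter x hx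
  have hdisj : (T : Set (EuclideanSpace ℝ (Fin n))).PairwiseDisjoint fun x => ball x (s / 10) :=
    fun x hx y hy hxy => ball_disjoint_ball <| by linarith [hsep x (hTI x hx) y (hTI y hy) hxy]
  have hbad : ∀ x ∈ T, ∀ z ∈ ball x (s / 10), ENNReal.ofReal (η / 2 ^ n) ^ 2 ≤
      betaNum n μ z (2 * s) ^ 2 := by
    intro x hx z hz
    have hlt := (Finset.mem_filter.1 hx).2.le.trans <|
      betaNum_le_two_pow_mul_betaNum n μ hs (by linarith [mem_ball'.1 hz])
    rw [ENNReal.ofReal_div_of_pos (by positivity), ENNReal.ofReal_pow zero_le_two,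
      ENNReal.ofReal_ofNat]
    gcongr
    exact ENNReal.div_le_of_le_mul' hlt
  have hcount := card_mul_le_lintegral_of_pairwiseDisjoint (fun _ _ => measurableSet_ball) hdisj
    (fun x hx => hAD x (hIS (hTI x hx)) _ (by positivity) hsr) hbad
  have hone : ENNReal.ofReal (4 ^ n * 10 ^ (n - 1) / c * η ^ (-2 : ℝ) * s ^ ((1 : ℝ) - n)) *
      (ENNReal.ofReal (c * (s / 10) ^ (n - 1)) * ENNReal.ofReal (η / 2 ^ n) ^ 2) = 1 := by
    rw [← ENNReal.ofReal_pow (by positivity), ← ENNReal.ofReal_mul (by positivity),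
      ← ENNReal.ofReal_mul (by positivity),
      four_pow_mul_ten_pow_div_mul_eq_one (n := n) (by omega) hc.ne' hη hs, ENNReal.ofReal_one]
  calc (T.card : ℝ≥0∞) = _ * (T.card * _) := by rw [mul_left_comm, hone, mul_one]
    _ ≤ _ := by gcongr
end

section
/- Let n ≥ 2 and let μ be a finite Borel measure on ℝ^n. For x ∈ ℝ^n and r > 0 define the β-number β_μ(x,r) := inf_P r^{−n} ∫_{B(x,r)} dist(z, P) dμ(z), where the infimum is over all affine hyperplanes P ⊆ ℝ^n (affine subspaces of dimension n−1) and B(x,r) is the open Euclidean ball. Let S ⊆ ℝ^n be Borel with μ(ℝ^n ∖ S) = 0, let c > 0 and r₀ ∈ (0,1) be such that μ(B(x,ρ)) ≥ c ρ^{n−1} for every x ∈ S and every 0 < ρ < r₀, and assume the global square-function bound ∫_S ∫_0^1 β_μ(x,s)² s^{−1} ds dμ(x) ≤ A₁ < ∞. Fix η ∈ (0,1). Then there exist a constant C depending only on n and c, and a sequence r_j ∈ (0, r₀) with r_j → 0, such that for every j and every finite family of points {x_h} ⊆ S with pairwise distances at least r_j/5, the number of indices h with β_μ(x_h, r_j)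 > η is at most C η^{−2} A₁ r_j^{1−n} / |log r_j|. -/
open MeasureTheory Metric Filter
open scoped ENNReal Classical Topology

/-! Split `(0, 1]` into the disjoint dyadic shells `(3/2 · 2⁻ᵏ, 2 · 2⁻ᵏ]`. Among the `K` shells with
`K < k ≤ 2K` one carries at most `A₁ / K` of the square function; the scale `r = 2⁻ᵏ` of that shell
has `|log r| ≤ 2 K log 2`. If `β(x, r) > η` then for `z ∈ B(x, r/10)` and `s` in the shell,
`B(x, r) ⊆ B(z, s)` and `s ≤ 2r`, so `β(z, s) ≥ 2⁻ⁿ η`: the shell integral at `z` is at least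
`η² / 4ⁿ⁺¹`, and integrating over `B(x, r/10)`, of measure `≥ c (r/10)ⁿ⁻¹`, every bad centre
contributes `≳ η² c rⁿ⁻¹`. These balls are disjoint by the `r/5`-separation, so the number of bad
centres times this contribution is at most `A₁ / K`. -/

open Set Function

section LowerIntegral

variable {α ι : Type*} [MeasurableSpace α] {μ : Measure α}

theorem sum_lintegral_le_lintegral_sum (s : Finset ι) (f : ι → α → ℝ≥0∞) :
    ∑ i ∈ s, ∫⁻ a, f i a ∂μ ≤ ∫⁻ a, ∑ i ∈ s, f i a ∂μ := by
  have := Finset.le_sum_of_subadditive (fun g : α → ℝ≥0∞ => OrderDual.toDual (∫⁻ a, g a ∂μ))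
    (by simp) (fun g h => le_lintegral_add g h) s f
  simp only [Finset.sum_apply] at this
  exact this

theorem sum_setLIntegral_le_of_pairwiseDisjoint {s : Finset ι} {E : ι → Set α} {T : Set α}
    (hd : (s : Set ι).PairwiseDisjoint E) (hm : ∀ i ∈ s, MeasurableSet (E i))
    (hT : ∀ i ∈ s, E i ⊆ T) (g : α → ℝ≥0∞) :
    ∑ i ∈ s, ∫⁻ a in E i, g a ∂μ ≤ ∫⁻ a in T, g a ∂μ := by
  rw [← lintegral_biUnion_finset hd hm]
  exact lintegral_mono_set (iUnion₂_subset hT)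

end LowerIntegral

theorem Finset.exists_card_mul_le_sum {ι : Type*} {s : Finset ι} (hs : s.Nonempty)
    (F : ι → ℝ≥0∞) : ∃ i ∈ s, (s.card : ℝ≥0∞) * F i ≤ ∑ j ∈ s, F j := by
  obtain ⟨i, hi, hmin⟩ := s.exists_min_image F hs
  exact ⟨i, hi, by simpa only [nsmul_eq_mul] using s.card_nsmul_le_sum F (F i) hmin⟩

theorem Metric.pairwiseDisjoint_ball_of_le_dist {E : Type*} [PseudoMetricSpace E] {s : Set E}
    {ρ : ℝ} (hs : ∀ x ∈ s, ∀ y ∈ s, x ≠ y → 2 * ρ ≤ dist x y) :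
    s.PairwiseDisjoint (ball · ρ) :=
  fun x hx y hy hxy => ball_disjoint_ball (by linarith [hs x hx y hy hxy])

def dyadicShell (k : ℕ) : Set ℝ := Ioc (3 / 2 * 2⁻¹ ^ k) (2 * 2⁻¹ ^ k)

theorem pairwise_disjoint_dyadicShell : Pairwise (Disjoint on dyadicShell) := by
  refine (pairwise_disjoint_on dyadicShell).2 fun k l hkl => (Ioc_disjoint_Ioc_of_le ?_).symm
  have : (2 : ℝ)⁻¹ ^ l ≤ 2⁻¹ ^ k * 2⁻¹ :=
    (pow_le_pow_of_le_one (by norm_num) (by norm_num) hkl).trans_eq (pow_succ _ _)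
  linarith [pow_pos (by norm_num : (0 : ℝ) < 2⁻¹) k]

theorem dyadicShell_subset_Ioc {k : ℕ} (hk : 1 ≤ k) : dyadicShell k ⊆ Ioc 0 1 := by
  have : (2 : ℝ)⁻¹ ^ k ≤ 2⁻¹ ^ 1 := pow_le_pow_of_le_one (by norm_num) (by norm_num) hk
  exact Ioc_subset_Ioc (by positivity) (by linarith)

section BetaNumber

variable {n : ℕ} (μ : Measure (EuclideanSpace ℝ (Fin n)))

theorem ofReal_div_pow_mul_betaNum_le {x z : EuclideanSpace ℝ (Fin n)} {r s : ℝ} (hr : 0 < r)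
    (hsub : ball x r ⊆ ball z s) :
    ENNReal.ofReal ((r / s) ^ n) * betaNum n μ x r ≤ betaNum n μ z s := by
  have hs : 0 < s := pos_of_mem_ball (hsub (mem_ball_self hr))
  have hweight : (r / s) ^ n * r ^ (-(n : ℝ)) = s ^ (-(n : ℝ)) := by
    rw [Real.rpow_neg hr.le, Real.rpow_neg hs.le, Real.rpow_natCast, Real.rpow_natCast, div_pow]
    field_simp
  refine le_iInf fun P => le_iInf fun hP => le_iInf fun hd => ?_
  calc ENNReal.ofReal ((r / s) ^ n) * betaNum n μ x r
      ≤ ENNReal.ofReal ((r / s) ^ n) * (ENNReal.ofReal (r ^ (-(n : ℝ))) *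
          ∫⁻ w in ball x r, ENNReal.ofReal (infDist w P) ∂μ) := by
        gcongr
        exact iInf_le_of_le P (iInf_le_of_le hP (iInf_le _ hd))
    _ = ENNReal.ofReal (s ^ (-(n : ℝ))) * ∫⁻ w in ball x r, ENNReal.ofReal (infDist w P) ∂μ := by
        rw [← mul_assoc, ← ENNReal.ofReal_mul (by positivity), hweight]
    _ ≤ _ := by gcongr

noncomputable def betaSqOnShell (k : ℕ) (x : EuclideanSpace ℝ (Fin n)) : ℝ≥0∞ :=
  ∫⁻ s in dyadicShell k, betaNum n μ x s ^ 2 * ENNReal.ofReal s⁻¹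

theorem sum_setLIntegral_betaSqOnShell_le (S : Set (EuclideanSpace ℝ (Fin n))) {T : Finset ℕ}
    (hT : ∀ k ∈ T, 1 ≤ k) :
    ∑ k ∈ T, ∫⁻ x in S, betaSqOnShell μ k x ∂μ ≤
      ∫⁻ x in S, (∫⁻ s in Ioc (0 : ℝ) 1, betaNum n μ x s ^ 2 * ENNReal.ofReal s⁻¹) ∂μ :=
  (sum_lintegral_le_lintegral_sum _ _).trans <| lintegral_mono fun _ =>
    sum_setLIntegral_le_of_pairwiseDisjoint (pairwise_disjoint_dyadicShell.set_pairwise _)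
      (fun _ _ => measurableSet_Ioc) (fun k hk => dyadicShell_subset_Ioc (hT k hk)) _

theorem exists_mul_setLIntegral_betaSqOnShell_le (S : Set (EuclideanSpace ℝ (Fin n))) {K : ℕ}
    (hK : 0 < K) :
    ∃ k, K < k ∧ k ≤ 2 * K ∧ K * ∫⁻ x in S, betaSqOnShell μ k x ∂μ ≤
      ∫⁻ x in S, (∫⁻ s in Ioc (0 : ℝ) 1, betaNum n μ x s ^ 2 * ENNReal.ofReal s⁻¹) ∂μ := by
  obtain ⟨k, hk, hle⟩ := Finset.exists_card_mul_le_sum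
    (Finset.nonempty_Ioc.2 (by omega : K < 2 * K)) fun k => ∫⁻ x in S, betaSqOnShell μ k x ∂μ
  rw [Nat.card_Ioc, show 2 * K - K = K by omega] at hle
  obtain ⟨hKk, hk2K⟩ := Finset.mem_Ioc.1 hk
  exact ⟨k, hKk, hk2K, hle.trans (sum_setLIntegral_betaSqOnShell_le μ S fun k' hk' => by grind)⟩

theorem ofReal_le_lintegral_betaNum_sq {η r : ℝ} (hη : 0 ≤ η) (hr : 0 < r)
    {x z : EuclideanSpace ℝ (Fin n)} (hx : ENNReal.ofReal η < betaNum n μ x r)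
    (hz : dist z x < r / 2) :
    ENNReal.ofReal (η ^ 2 / 4 ^ (n + 1)) ≤
      ∫⁻ s in Ioc (3 / 2 * r) (2 * r), betaNum n μ z s ^ 2 * ENNReal.ofReal s⁻¹ := by
  have hpoint : ∀ s ∈ Ioc (3 / 2 * r) (2 * r), ENNReal.ofReal ((2⁻¹ ^ n * η) ^ 2 * (2 * r)⁻¹) ≤
      betaNum n μ z s ^ 2 * ENNReal.ofReal s⁻¹ := by
    rintro s ⟨hs₁, hs₂⟩
    have hs : 0 < s := by linarith
    have hsub : ball x r ⊆ ball z s := ball_subset_ball' (by rw [dist_comm]; linarith)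
    have hβ : ENNReal.ofReal (2⁻¹ ^ n * η) ≤ betaNum n μ z s := calc
      ENNReal.ofReal (2⁻¹ ^ n * η) = ENNReal.ofReal (2⁻¹ ^ n) * ENNReal.ofReal η :=
          ENNReal.ofReal_mul (by positivity)
      _ ≤ ENNReal.ofReal ((r / s) ^ n) * betaNum n μ x r := by
          gcongr
          rw [le_div_iff₀ hs]
          linarith
      _ ≤ _ := ofReal_div_pow_mul_betaNum_le μ hr hsub
    rw [ENNReal.ofReal_mul (by positivity), ENNReal.ofReal_pow (by positivity)]
    gcongr
  calc ENNReal.ofReal (η ^ 2 / 4 ^ (n + 1))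
      = ENNReal.ofReal ((2⁻¹ ^ n * η) ^ 2 * (2 * r)⁻¹) * volume (Ioc (3 / 2 * r) (2 * r)) := by
        rw [Real.volume_Ioc, ← ENNReal.ofReal_mul (by positivity)]
        congr 1
        rw [pow_succ (4 : ℝ), inv_pow,
          show (4 : ℝ) ^ n = (2 ^ n) ^ 2 by rw [← pow_mul, mul_comm, pow_mul]; norm_num]
        field_simp
        ring
    _ = ∫⁻ _ in Ioc (3 / 2 * r) (2 * r), ENNReal.ofReal ((2⁻¹ ^ n * η) ^ 2 * (2 * r)⁻¹) :=
        (setLIntegral_const _ _).symm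
    _ ≤ _ := setLIntegral_mono' measurableSet_Ioc hpoint

theorem card_mul_le_setLIntegral_betaSqOnShell {S : Set (EuclideanSpace ℝ (Fin n))}
    (hS : MeasurableSet S) (hSc : μ Sᶜ = 0) {c r₀ : ℝ}
    (hlower : ∀ x ∈ S, ∀ ρ : ℝ, 0 < ρ → ρ < r₀ →
      ENNReal.ofReal (c * ρ ^ (n - 1)) ≤ μ (ball x ρ))
    {k : ℕ} (hk : 2⁻¹ ^ k < r₀) {η : ℝ} (hη : 0 ≤ η) {I : Finset (EuclideanSpace ℝ (Fin n))}
    (hIS : ↑I ⊆ S) (hsep : ∀ x ∈ I, ∀ y ∈ I, x ≠ y → 2⁻¹ ^ k / 5 ≤ dist x y) :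
    (I.filter fun x => ENNReal.ofReal η < betaNum n μ x (2⁻¹ ^ k)).card *
        ENNReal.ofReal (η ^ 2 / 4 ^ (n + 1) * (c * (2⁻¹ ^ k / 10) ^ (n - 1)))
      ≤ ∫⁻ z in S, betaSqOnShell μ k z ∂μ := by
  set r : ℝ := 2⁻¹ ^ k
  have hr : 0 < r := by positivity
  set bad := I.filter fun x => ENNReal.ofReal η < betaNum n μ x r
  have hdisj : (bad : Set _).PairwiseDisjoint fun x => ball x (r / 10) ∩ S :=
    ((pairwiseDisjoint_ball_of_le_dist (s := (I : Set _)) fun x hx y hy hxy => by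
      linarith [hsep x hx y hy hxy]).subset (Finset.coe_subset.2 (Finset.filter_subset _ _))).mono
      fun _ => inter_subset_left
  calc (bad.card : ℝ≥0∞) * _
      = ∑ x ∈ bad, ENNReal.ofReal (η ^ 2 / 4 ^ (n + 1)) *
          ENNReal.ofReal (c * (r / 10) ^ (n - 1)) := by
        rw [Finset.sum_const, nsmul_eq_mul, ENNReal.ofReal_mul (by positivity)]
    _ ≤ ∑ x ∈ bad, ∫⁻ z in ball x (r / 10) ∩ S, betaSqOnShell μ k z ∂μ := by
        refine Finset.sum_le_sum fun x hx => ?_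
        obtain ⟨hxI, hxbad⟩ := Finset.mem_filter.1 hx
        calc _ ≤ ENNReal.ofReal (η ^ 2 / 4 ^ (n + 1)) * μ (ball x (r / 10) ∩ S) := by
              rw [measure_inter_conull hSc]
              gcongr
              exact hlower x (hIS hxI) _ (by positivity) (by linarith)
          _ = ∫⁻ _ in ball x (r / 10) ∩ S, ENNReal.ofReal (η ^ 2 / 4 ^ (n + 1)) ∂μ :=
              (setLIntegral_const _ _).symm
          _ ≤ _ := setLIntegral_mono' (measurableSet_ball.inter hS) fun z hz =>
              ofReal_le_lintegral_betaNum_sq μ hη hr hxbad (by linarith [mem_ball.1 hz.1])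
    _ ≤ _ := sum_setLIntegral_le_of_pairwiseDisjoint hdisj
        (fun _ _ => measurableSet_ball.inter hS) (fun _ _ => inter_subset_right) _

end BetaNumber

theorem abs_log_inv_two_pow (k : ℕ) : |Real.log (2⁻¹ ^ k)| = k * Real.log 2 := by
  rw [Real.log_pow, Real.log_inv, mul_neg, abs_neg, abs_of_nonneg (by positivity)]

-- `|log 2⁻¹ ^ k| = k log 2 ≤ 2 K log 2` gives the factor `2 log 2` of the constant; the factor
-- `4 ^ (n + 1) * 10 ^ (n - 1)` undoes the mass `η² / 4 ^ (n + 1) * c (r / 10) ^ (n - 1)` of a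
-- bad ball.
theorem div_le_log_gain {n K k : ℕ} (hn : 1 ≤ n) (hKk : K < k) (hk2K : k ≤ 2 * K)
    {A c η : ℝ} (hA : 0 ≤ A) (hc : 0 < c) (hη : 0 < η) :
    A / (K * (η ^ 2 / 4 ^ (n + 1) * (c * (2⁻¹ ^ k / 10) ^ (n - 1)))) ≤
      2 * Real.log 2 * 4 ^ (n + 1) * 10 ^ (n - 1) / c * η ^ (-2 : ℝ) * A *
        (2⁻¹ ^ k) ^ ((1 : ℝ) - n) / |Real.log (2⁻¹ ^ k)| := by
  set r : ℝ := 2⁻¹ ^ k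
  have hr : 0 < r := by positivity
  have hK : (0 : ℝ) < K := by exact_mod_cast (by omega : 0 < K)
  have hk : (0 : ℝ) < k := by exact_mod_cast (by omega : 0 < k)
  have hkK : (k : ℝ) ≤ 2 * K := by exact_mod_cast hk2K
  have hrpow : r ^ ((1 : ℝ) - n) = (r ^ (n - 1))⁻¹ := by
    rw [← Real.rpow_natCast, ← Real.rpow_neg hr.le, Nat.cast_sub hn]
    ring_nf
  rw [abs_log_inv_two_pow, hrpow, Real.rpow_neg hη.le, Real.rpow_two, div_pow]
  set X : ℝ := A * 4 ^ (n + 1) * 10 ^ (n - 1) / (c * η ^ 2 * r ^ (n - 1))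
  have hX : 0 ≤ X := by positivity
  calc _ = X / K := by simp only [X]; field_simp
    _ ≤ 2 * X / k := by rw [div_le_div_iff₀ hK hk]; nlinarith
    _ = _ := by simp only [X]; field_simp

theorem ENNReal.natCast_le_ofReal_of_mul_le {N : ℕ} {A a b : ℝ} (hb : 0 < b)
    (h : N * ENNReal.ofReal b ≤ ENNReal.ofReal A) (ha : 0 < A → A / b ≤ a) :
    (N : ℝ≥0∞) ≤ ENNReal.ofReal a := by
  rcases Nat.eq_zero_or_pos N with rfl | hN
  · simp
  have hNb : 0 < (N : ℝ) * b := by positivity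
  rw [← ENNReal.ofReal_natCast, ← ENNReal.ofReal_mul (Nat.cast_nonneg _),
    ENNReal.ofReal_le_ofReal_iff'] at h
  have hNbA : (N : ℝ) * b ≤ A := h.resolve_right hNb.not_ge
  rw [← ENNReal.ofReal_natCast]
  exact ENNReal.ofReal_le_ofReal (((le_div_iff₀ hb).2 hNbA).trans (ha (hNb.trans_le hNbA)))

/-- Under a lower Ahlfors–David bound and a global β-number square-function bound,
there is a sequence of scales `r_j → 0` at which the number of β-bad centers of any
`r_j/5`-separated net gains a factor `1/|log r_j|`:
`#{h : β_μ(x_h, r_j) > η} ≤ C η⁻² A₁ r_j^{1-n} / |log r_j|` with `C = C(n,c)`. -/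
theorem betaNum_bad_count_log_gain
    (n : ℕ) (hn : 2 ≤ n) (c : ℝ) (hc : 0 < c) :
    ∃ C : ℝ, 0 < C ∧
      ∀ (μ : Measure (EuclideanSpace ℝ (Fin n))), IsFiniteMeasure μ →
      ∀ S : Set (EuclideanSpace ℝ (Fin n)), MeasurableSet S → μ Sᶜ = 0 →
      ∀ r₀ : ℝ, 0 < r₀ → r₀ < 1 →
      (∀ x ∈ S, ∀ ρ : ℝ, 0 < ρ → ρ < r₀ →
        ENNReal.ofReal (c * ρ ^ (n - 1)) ≤ μ (ball x ρ)) →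
      ∀ A₁ : ℝ,
      (∫⁻ x in S,
          (∫⁻ s in Set.Ioc (0 : ℝ) 1,
            (betaNum n μ x s) ^ 2 * ENNReal.ofReal s⁻¹) ∂μ) ≤ ENNReal.ofReal A₁ →
      ∀ η : ℝ, 0 < η → η < 1 →
      ∃ r : ℕ → ℝ, (∀ j, 0 < r j ∧ r j < r₀) ∧ Tendsto r atTop (𝓝 0) ∧
        ∀ j : ℕ, ∀ I : Finset (EuclideanSpace ℝ (Fin n)),
          (↑I : Set (EuclideanSpace ℝ (Fin n))) ⊆ S →
          (∀ x ∈ I, ∀ y ∈ I, x ≠ y → r j / 5 ≤ dist x y) →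
          ((I.filter fun x => ENNReal.ofReal η < betaNum n μ x (r j)).card : ℝ≥0∞) ≤
            ENNReal.ofReal
              (C * η ^ (-2 : ℝ) * A₁ * (r j) ^ ((1 : ℝ) - n) / |Real.log (r j)|) := by
  refine ⟨2 * Real.log 2 * 4 ^ (n + 1) * 10 ^ (n - 1) / c, by positivity, ?_⟩
  intro μ _ S hS hSc r₀ hr₀ _ hlower A₁ hA₁ η hη _
  obtain ⟨K₀, hK₀⟩ := exists_pow_lt_of_lt_one hr₀ (by norm_num : (2 : ℝ)⁻¹ < 1)
  choose k hKk hk2K hkF using fun j : ℕ =>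
    exists_mul_setLIntegral_betaSqOnShell_le μ S (K := max (j + 1) K₀) (by omega)
  have hr : ∀ j, (2 : ℝ)⁻¹ ^ k j < r₀ := fun j =>
    (pow_le_pow_of_le_one (by norm_num) (by norm_num) (by grind)).trans_lt hK₀
  have hk : Tendsto k atTop atTop := tendsto_atTop_mono (fun j => by grind) tendsto_id
  refine ⟨fun j => 2⁻¹ ^ k j, fun j => ⟨by positivity, hr j⟩,
    (tendsto_pow_atTop_nhds_zero_of_lt_one (by norm_num) (by norm_num)).comp hk,
    fun j I hIS hsep => ENNReal.natCast_le_ofReal_of_mul_le (by positivity) ?_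
      fun hA => div_le_log_gain (by omega) (hKk j) (hk2K j) hA.le hc hη⟩
  rw [ENNReal.ofReal_mul (Nat.cast_nonneg _), ENNReal.ofReal_natCast, mul_left_comm]
  exact (mul_le_mul_right (card_mul_le_setLIntegral_betaSqOnShell μ hS hSc hlower (hr j) hη.le hIS
    hsep) _).trans ((hkF j).trans hA₁)
end

section
/- Let n ≥ 2, γ ∈ (0, n−1], and let S ⊆ ℝ^n be a nonempty set and M ≥ 1 a constant such that the Lebesgue measure of {x ∈ ℝ^n : dist(x,S) ≤ ρ} is at most M ρ for every ρ ∈ (0,1]. Let {B(x_k, r_k)}_{k ∈ I} be a finite family of pairwise disjoint open Euclidean balls with 0 < ρ₀ ≤ r_k ≤ 1/6 and dist(x_k, S) ≤ 2 r_k for every k. Then ∑_{k ∈ I} r_k^{ n−1−γ} ≤ C M ρ₀^{−γ}, where C is a constant depending only on n and γ. -/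
open MeasureTheory Metric
open scoped ENNReal

/-- Whitney-type counting estimate: if the `ρ`-neighborhoods of `S` have Lebesgue measure
at most `M ρ`, then for any finite family of pairwise disjoint balls of radii
`ρ₀ ≤ r_k ≤ 1/6` centered at distance at most `2 r_k` from `S` one has
`∑_k r_k^{n-1-γ} ≤ C M ρ₀^{-γ}` with `C = C(n,γ)`. -/
theorem whitney_counting
    (n : ℕ) (hn : 2 ≤ n) (γ : ℝ) (hγ : 0 < γ) (hγn : γ ≤ (n : ℝ) - 1) :
    ∃ C : ℝ, 0 < C ∧
      ∀ S : Set (EuclideanSpace ℝ (Fin n)), S.Nonempty →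
      ∀ M : ℝ, 1 ≤ M →
      (∀ ρ : ℝ, 0 < ρ → ρ ≤ 1 →
        volume {x : EuclideanSpace ℝ (Fin n) | infDist x S ≤ ρ} ≤ ENNReal.ofReal (M * ρ)) →
      ∀ ρ₀ : ℝ, 0 < ρ₀ →
      ∀ (ι : Type) (I : Finset ι) (x : ι → EuclideanSpace ℝ (Fin n)) (rad : ι → ℝ),
      (∀ k ∈ I, ∀ l ∈ I, k ≠ l →
        Disjoint (ball (x k) (rad k)) (ball (x l) (rad l))) →
      (∀ k ∈ I, ρ₀ ≤ rad k ∧ rad k ≤ 1 / 6 ∧ infDist (x k) S ≤ 2 * rad k) →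
      ∑ k ∈ I, (rad k) ^ ((n : ℝ) - 1 - γ) ≤ C * M * ρ₀ ^ (-γ) := by
  classical
  haveI : Nonempty (Fin n) := ⟨⟨0, by omega⟩⟩
  have h12 : (1:ℝ) < 2 := one_lt_two
  have hq1 : (1:ℝ) < (2:ℝ) ^ γ := Real.one_lt_rpow_iff_of_pos (by norm_num) |>.2 (Or.inl ⟨h12, hγ⟩)
  set ωe : ℝ≥0∞ := volume (ball (0 : EuclideanSpace ℝ (Fin n)) 1) with hωe
  have hωe_top : ωe ≠ ⊤ := measure_ball_lt_top.ne
  have hωe_pos : 0 < ωe := measure_ball_pos _ _ one_pos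
  set ω : ℝ := ωe.toReal with hωdef
  have hω0 : 0 < ω := ENNReal.toReal_pos hωe_pos.ne' hωe_top
  have hωe_eq : ωe = ENNReal.ofReal ω := (ENNReal.ofReal_toReal hωe_top).symm
  set q : ℝ := (2:ℝ) ^ γ with hqdef
  have hq0 : 0 < q := by positivity
  refine ⟨3 * (2:ℝ) ^ (1+γ) * q / (ω * (q - 1)), by
    apply div_pos (by positivity) (mul_pos hω0 (by linarith)), ?_⟩
  intro S hS M hM hvol ρ₀ hρ₀ ι I x rad hdisj hball
  have hM0 : (0:ℝ) ≤ M := by linarith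
  have hC0 : 0 ≤ 3 * (2:ℝ) ^ (1+γ) * q / (ω * (q - 1)) * M * ρ₀ ^ (-γ) := by
    apply mul_nonneg (mul_nonneg _ hM0) (by positivity)
    exact le_of_lt (div_pos (by positivity) (mul_pos hω0 (by linarith)))
  rcases I.eq_empty_or_nonempty with rfl | ⟨k₀, hk₀⟩
  · simpa using hC0
  have hρ₀6 : ρ₀ ≤ 1/6 := le_trans (hball k₀ hk₀).1 (hball k₀ hk₀).2.1
  -- dyadic class of each ball
  set mk : ι → ℕ := fun k => ⌊Real.logb 2 (rad k)⁻¹⌋₊ with hmk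
  set T : ℕ := ⌊Real.logb 2 ρ₀⁻¹⌋₊ with hT
  have hrad_pos : ∀ k ∈ I, 0 < rad k := fun k hk => lt_of_lt_of_le hρ₀ (hball k hk).1
  -- basic dyadic facts
  have hkey : ∀ k ∈ I, rad k ≤ (2:ℝ) ^ (-(mk k : ℝ)) ∧ (2:ℝ) ^ (-(mk k : ℝ) - 1) ≤ rad k
      ∧ 2 ≤ mk k ∧ mk k ≤ T := by
    intro k hk
    have hr0 : 0 < rad k := hrad_pos k hk
    have hr6 : rad k ≤ 1/6 := (hball k hk).2.1
    have hinv6 : (6:ℝ) ≤ (rad k)⁻¹ := by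
      rw [show (6:ℝ) = (1/6:ℝ)⁻¹ by norm_num]
      exact inv_anti₀ hr0 hr6
    have hinv_pos : 0 < (rad k)⁻¹ := by positivity
    have hlog_nonneg : 0 ≤ Real.logb 2 (rad k)⁻¹ :=
      Real.logb_nonneg h12 (by linarith)
    have hfl : (mk k : ℝ) ≤ Real.logb 2 (rad k)⁻¹ := Nat.floor_le hlog_nonneg
    have hfl' : Real.logb 2 (rad k)⁻¹ < (mk k : ℝ) + 1 := Nat.lt_floor_add_one _
    have h1 : (2:ℝ) ^ ((mk k : ℝ)) ≤ (rad k)⁻¹ := by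
      calc (2:ℝ) ^ ((mk k : ℝ)) ≤ (2:ℝ) ^ (Real.logb 2 (rad k)⁻¹) :=
            Real.rpow_le_rpow_of_exponent_le h12.le hfl
        _ = (rad k)⁻¹ := Real.rpow_logb two_pos (by norm_num) hinv_pos
    have h2 : (rad k)⁻¹ ≤ (2:ℝ) ^ ((mk k : ℝ) + 1) := by
      calc (rad k)⁻¹ = (2:ℝ) ^ (Real.logb 2 (rad k)⁻¹) :=
            (Real.rpow_logb two_pos (by norm_num) hinv_pos).symm
        _ ≤ (2:ℝ) ^ ((mk k : ℝ) + 1) :=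
            Real.rpow_le_rpow_of_exponent_le h12.le hfl'.le
    refine ⟨?_, ?_, ?_, ?_⟩
    · rw [Real.rpow_neg two_pos.le]
      rw [show rad k = ((rad k)⁻¹)⁻¹ by simp]
      exact inv_anti₀ (by positivity) h1
    · rw [show -(mk k : ℝ) - 1 = -((mk k : ℝ) + 1) by ring, Real.rpow_neg two_pos.le]
      rw [show rad k = ((rad k)⁻¹)⁻¹ by simp]
      exact inv_anti₀ hinv_pos h2
    · have : (2:ℝ) ≤ Real.logb 2 (rad k)⁻¹ := by
        rw [Real.le_logb_iff_rpow_le h12 hinv_pos]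
        calc (2:ℝ) ^ (2:ℝ) = 4 := by
              rw [show (2:ℝ) = ((2:ℕ):ℝ) by norm_num, Real.rpow_natCast]; norm_num
          _ ≤ (rad k)⁻¹ := by linarith
      exact_mod_cast Nat.le_floor (by exact_mod_cast this)
    · apply Nat.floor_le_floor
      exact Real.logb_le_logb_of_le h12 (by positivity)
        (inv_anti₀ hρ₀ (hball k hk).1)
  -- per-class estimate
  have hclass : ∀ m : ℕ, ∑ k ∈ I.filter (fun k => mk k = m), rad k ^ ((n:ℝ) - 1 - γ)
      ≤ 3 * (2:ℝ) ^ (1+γ) / ω * M * q ^ m := by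
    intro m
    set J := I.filter (fun k => mk k = m) with hJ
    have hJI : J ⊆ I := Finset.filter_subset _ _
    rcases J.eq_empty_or_nonempty with hJe | ⟨k₁, hk₁⟩
    · rw [hJe]
      simp only [Finset.sum_empty]
      apply mul_nonneg (mul_nonneg (by positivity) hM0) (by positivity)
    · have hm2 : 2 ≤ m := by
        have := (hkey k₁ (hJI hk₁)).2.2.1
        rwa [(Finset.mem_filter.1 hk₁).2] at this
      have hρm_pos : (0:ℝ) < 3 * (2:ℝ) ^ (-(m:ℝ)) := by positivity
      have hρm_le1 : 3 * (2:ℝ) ^ (-(m:ℝ)) ≤ 1 := by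
        have : (2:ℝ) ^ (-(m:ℝ)) ≤ (2:ℝ) ^ (-(2:ℝ)) := by
          apply Real.rpow_le_rpow_of_exponent_le h12.le
          simp only [neg_le_neg_iff]; exact_mod_cast hm2
        have h4 : (2:ℝ) ^ (-(2:ℝ)) = 1/4 := by
          rw [Real.rpow_neg two_pos.le, show (2:ℝ) = ((2:ℕ):ℝ) by norm_num,
            Real.rpow_natCast]; norm_num
        rw [h4] at this; linarith
      -- balls in class m are inside the (3·2^{-m})-neighborhood of S
      have hsub : ∀ k ∈ J, ball (x k) (rad k) ⊆
          {y : EuclideanSpace ℝ (Fin n) | infDist y S ≤ 3 * (2:ℝ) ^ (-(m:ℝ))} := by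
        intro k hk y hy
        have hmem := Finset.mem_filter.1 hk
        have hle : rad k ≤ (2:ℝ) ^ (-(m:ℝ)) := by
          have := (hkey k (hJI hk)).1
          rwa [hmem.2] at this
        have h1 : infDist y S ≤ infDist (x k) S + dist y (x k) :=
          infDist_le_infDist_add_dist
        have h2 : dist y (x k) < rad k := mem_ball.1 hy
        have h3 : infDist (x k) S ≤ 2 * rad k := (hball k (hJI hk)).2.2
        have : infDist y S ≤ 3 * rad k := by linarith
        exact le_trans this (by linarith)
      -- volume bound
      have hvsum : ∑ k ∈ J, rad k ^ n * ω ≤ M * (3 * (2:ℝ) ^ (-(m:ℝ))) := by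
        have hdisj' : (↑J : Set ι).PairwiseDisjoint
            (fun k => ball (x k) (rad k)) := by
          intro a ha b hb hab
          exact hdisj a (hJI ha) b (hJI hb) hab
        have hmeas := measure_biUnion_finset (μ := volume) hdisj'
          (fun k _ => measurableSet_ball)
        have hle1 : ∑ k ∈ J, volume (ball (x k) (rad k))
            ≤ ENNReal.ofReal (M * (3 * (2:ℝ) ^ (-(m:ℝ)))) := by
          rw [← hmeas]
          refine le_trans (measure_mono ?_) (hvol _ hρm_pos hρm_le1)
          exact Set.iUnion₂_subset hsub
        have hballvol : ∀ k ∈ J, volume (ball (x k) (rad k))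
            = ENNReal.ofReal (rad k ^ n * ω) := by
          intro k hk
          rw [Measure.addHaar_ball _ _ (hrad_pos k (hJI hk)).le,
            finrank_euclideanSpace_fin, ← hωe, hωe_eq,
            ← ENNReal.ofReal_mul (pow_nonneg (hrad_pos k (hJI hk)).le n)]
        rw [Finset.sum_congr rfl hballvol,
          ← ENNReal.ofReal_sum_of_nonneg
            (fun k hk => mul_nonneg (pow_nonneg (hrad_pos k (hJI hk)).le n) hω0.le)] at hle1
        exact (ENNReal.ofReal_le_ofReal_iff (mul_nonneg hM0 (by positivity))).1 hle1
      -- pointwise bound on the summand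
      set c : ℝ := ((2:ℝ) ^ (-(m:ℝ) - 1)) ^ (-1 - γ) with hc
      have hc0 : 0 ≤ c := by positivity
      have hpt : ∀ k ∈ J, rad k ^ ((n:ℝ) - 1 - γ) ≤ rad k ^ n * c := by
        intro k hk
        have hr0 : 0 < rad k := hrad_pos k (hJI hk)
        have hge : (2:ℝ) ^ (-(m:ℝ) - 1) ≤ rad k := by
          have := (hkey k (hJI hk)).2.1
          rwa [(Finset.mem_filter.1 hk).2] at this
        have hsplit : rad k ^ ((n:ℝ) - 1 - γ) = rad k ^ (n:ℝ) * rad k ^ (-1 - γ) := by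
          rw [← Real.rpow_add hr0]; ring_nf
        rw [hsplit, Real.rpow_natCast]
        apply mul_le_mul_of_nonneg_left _ (by positivity)
        -- rad k ^ (-1-γ) ≤ c
        rw [show (-1 - γ : ℝ) = -(1 + γ) by ring, Real.rpow_neg hr0.le, hc,
          show (-1 - γ : ℝ) = -(1 + γ) by ring, Real.rpow_neg (by positivity)]
        apply inv_anti₀ (by positivity)
        exact Real.rpow_le_rpow (by positivity) hge (by linarith)
      have step1 : ∑ k ∈ J, rad k ^ ((n:ℝ) - 1 - γ) ≤ (∑ k ∈ J, rad k ^ n) * c := by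
        rw [Finset.sum_mul]
        exact Finset.sum_le_sum hpt
      have step2 : (∑ k ∈ J, rad k ^ n) ≤ M * (3 * (2:ℝ) ^ (-(m:ℝ))) / ω := by
        rw [le_div_iff₀ hω0, ← Finset.sum_mul] at *
        exact hvsum
      have step3 : ∑ k ∈ J, rad k ^ ((n:ℝ) - 1 - γ)
          ≤ M * (3 * (2:ℝ) ^ (-(m:ℝ))) / ω * c :=
        le_trans step1 (mul_le_mul_of_nonneg_right step2 hc0)
      refine le_trans step3 (le_of_eq ?_)
      -- algebra: c * 2^{-m} = 2^{1+γ} * q^m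
      have hcval : c * (2:ℝ) ^ (-(m:ℝ)) = (2:ℝ) ^ (1+γ) * q ^ m := by
        rw [hc, ← Real.rpow_natCast q m, hqdef, ← Real.rpow_mul two_pos.le,
          ← Real.rpow_mul two_pos.le, ← Real.rpow_add two_pos, ← Real.rpow_add two_pos]
        ring_nf
      field_simp
      nlinarith [hcval, sq_nonneg ω]
  -- sum over classes
  have hmaps : ∀ k ∈ I, mk k ∈ Finset.range (T + 1) := by
    intro k hk
    exact Finset.mem_range.2 (Nat.lt_succ_of_le (hkey k hk).2.2.2)
  have hfiber : ∑ k ∈ I, rad k ^ ((n:ℝ) - 1 - γ)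
      = ∑ m ∈ Finset.range (T + 1), ∑ k ∈ I.filter (fun k => mk k = m),
          rad k ^ ((n:ℝ) - 1 - γ) :=
    (Finset.sum_fiberwise_of_maps_to hmaps _).symm
  rw [hfiber]
  have hgeom : ∑ m ∈ Finset.range (T + 1), q ^ m ≤ q ^ (T + 1) / (q - 1) := by
    rw [geom_sum_eq hq1.ne' (T + 1)]
    apply div_le_div_of_nonneg_right _ (by linarith)
    · linarith [pow_pos hq0 (T+1)]
  have hqT : q ^ (T + 1) ≤ q * ρ₀ ^ (-γ) := by
    have hρinv : (1:ℝ) ≤ ρ₀⁻¹ := by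
      rw [show (1:ℝ) = (1:ℝ)⁻¹ by norm_num]
      exact inv_anti₀ hρ₀ (by linarith)
    have h2T : (2:ℝ) ^ (T:ℝ) ≤ ρ₀⁻¹ := by
      have hfl : (T:ℝ) ≤ Real.logb 2 ρ₀⁻¹ :=
        Nat.floor_le (Real.logb_nonneg h12 hρinv)
      calc (2:ℝ) ^ (T:ℝ) ≤ (2:ℝ) ^ (Real.logb 2 ρ₀⁻¹) :=
            Real.rpow_le_rpow_of_exponent_le h12.le hfl
        _ = ρ₀⁻¹ := Real.rpow_logb two_pos (by norm_num) (by positivity)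
    calc q ^ (T + 1) = q * q ^ T := by ring
      _ = q * ((2:ℝ) ^ (T:ℝ)) ^ γ := by
          rw [← Real.rpow_natCast q T, hqdef, ← Real.rpow_mul two_pos.le,
            ← Real.rpow_mul two_pos.le, mul_comm γ ((T:ℕ):ℝ)]
      _ ≤ q * (ρ₀⁻¹) ^ γ := by
          apply mul_le_mul_of_nonneg_left _ hq0.le
          exact Real.rpow_le_rpow (by positivity) h2T hγ.le
      _ = q * ρ₀ ^ (-γ) := by
          rw [Real.rpow_neg hρ₀.le, ← Real.inv_rpow hρ₀.le]
  calc ∑ m ∈ Finset.range (T + 1), ∑ k ∈ I.filter (fun k => mk k = m),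
        rad k ^ ((n:ℝ) - 1 - γ)
      ≤ ∑ m ∈ Finset.range (T + 1), 3 * (2:ℝ) ^ (1+γ) / ω * M * q ^ m :=
        Finset.sum_le_sum (fun m _ => hclass m)
    _ = 3 * (2:ℝ) ^ (1+γ) / ω * M * ∑ m ∈ Finset.range (T + 1), q ^ m := by
        rw [Finset.mul_sum]
    _ ≤ 3 * (2:ℝ) ^ (1+γ) / ω * M * (q ^ (T + 1) / (q - 1)) := by
        apply mul_le_mul_of_nonneg_left hgeom
        apply mul_nonneg (by positivity) hM0
    _ ≤ 3 * (2:ℝ) ^ (1+γ) / ω * M * (q * ρ₀ ^ (-γ) / (q - 1)) := by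
        apply mul_le_mul_of_nonneg_left _ (mul_nonneg (by positivity) hM0)
        exact div_le_div_of_nonneg_right hqT (by linarith)
    _ = 3 * (2:ℝ) ^ (1+γ) * q / (ω * (q - 1)) * M * ρ₀ ^ (-γ) := by
        simp only [div_eq_mul_inv, mul_inv]; ring
end
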